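/- Let (M, ≺, ≻, α_M, β_M) be a BiHom-dendriform bimodule over a BiHom-dendriform algebra (A, ≺, ≻, α_A, β_A), with α_A, β_A, α_M, β_M invertible. Define a ∘_ℓ m = a≻m − α_M^{-1}β_M(m) ≺ α_A β_A^{-1}(a), m ∘_r a = m≻a − α_A^{-1}β_A(a) ≺ α_M β_M^{-1}(m), and on A: a∘b = a≻b − α_A^{-1}β_A(b) ≺ α_A β_A^{-1}(a). Then (M, ∘_ℓ, ∘_r, α_M, β_M) is a BiHom-pre-Lie bimodule over the BiHom-pre-Lie algebra (A, ∘, α_A, β_A). -/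
import Mathlib


/-- BiHom-dendriform algebra `(A, ≺ = p, ≻ = s, α, β)`. -/
def BHDendAlg {K A : Type*} [Field K] [AddCommGroup A] [Module K A]
    (p s : A →ₗ[K] A →ₗ[K] A) (α β : A →ₗ[K] A) : Prop :=
  (∀ a, α (β a) = β (α a)) ∧
  (∀ a b, α (p a b) = p (α a) (α b)) ∧ (∀ a b, α (s a b) = s (α a) (α b)) ∧
  (∀ a b, β (p a b) = p (β a) (β b)) ∧ (∀ a b, β (s a b) = s (β a) (β b)) ∧
  (∀ a b c, p (p a b) (β c) = p (α a) (p b c) + p (α a) (s b c)) ∧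
  (∀ a b c, s (α a) (p b c) = p (s a b) (β c)) ∧
  (∀ a b c, s (α a) (s b c) = s (p a b) (β c) + s (s a b) (β c))

/-- BiHom-dendriform bimodule over `(A, p, s, α, β)`:
`pl, sl : A ⊗ M → M` are `a ≺ m`, `a ≻ m`; `pr, sr : M ⊗ A → M` are `m ≺ a`, `m ≻ a`. -/
def BHDendBimod {K A M : Type*} [Field K] [AddCommGroup A] [Module K A]
    [AddCommGroup M] [Module K M]
    (p s : A →ₗ[K] A →ₗ[K] A) (α β : A →ₗ[K] A)
    (pl sl : A →ₗ[K] M →ₗ[K] M) (pr sr : M →ₗ[K] A →ₗ[K] M)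
    (αM βM : M →ₗ[K] M) : Prop :=
  (∀ m, αM (βM m) = βM (αM m)) ∧
  (∀ a m, αM (pl a m) = pl (α a) (αM m)) ∧ (∀ m a, αM (pr m a) = pr (αM m) (α a)) ∧
  (∀ a m, αM (sl a m) = sl (α a) (αM m)) ∧ (∀ m a, αM (sr m a) = sr (αM m) (α a)) ∧
  (∀ a m, βM (pl a m) = pl (β a) (βM m)) ∧ (∀ m a, βM (pr m a) = pr (βM m) (β a)) ∧
  (∀ a m, βM (sl a m) = sl (β a) (βM m)) ∧ (∀ m a, βM (sr m a) = sr (βM m) (β a)) ∧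
  (∀ a b m, pl (p a b) (βM m) = pl (α a) (pl b m) + pl (α a) (sl b m)) ∧
  (∀ a b m, sl (α a) (pl b m) = pl (s a b) (βM m)) ∧
  (∀ a b m, sl (α a) (sl b m) = sl (p a b) (βM m) + sl (s a b) (βM m)) ∧
  (∀ a m b, pr (pl a m) (β b) = pl (α a) (pr m b) + pl (α a) (sr m b)) ∧
  (∀ a m b, sl (α a) (pr m b) = pr (sl a m) (β b)) ∧
  (∀ a m b, sl (α a) (sr m b) = sr (pl a m) (β b) + sr (sl a m) (β b)) ∧
  (∀ m a b, pr (pr m a) (β b) = pr (αM m) (p a b) + pr (αM m) (s a b)) ∧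
  (∀ m a b, sr (αM m) (p a b) = pr (sr m a) (β b)) ∧
  (∀ m a b, sr (αM m) (s a b) = sr (pr m a) (β b) + sr (sr m a) (β b))

/-- (Left) BiHom-pre-Lie algebra `(A, c, α, β)`. -/
def BHPreLie {K A : Type*} [Field K] [AddCommGroup A] [Module K A]
    (c : A →ₗ[K] A →ₗ[K] A) (α β : A →ₗ[K] A) : Prop :=
  (∀ a, α (β a) = β (α a)) ∧
  (∀ a b, α (c a b) = c (α a) (α b)) ∧
  (∀ a b, β (c a b) = c (β a) (β b)) ∧
  (∀ a b x, c (α (β a)) (c (α b) x) - c (c (β a) (α b)) (β x) =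
    c (α (β b)) (c (α a) x) - c (c (β b) (α a)) (β x))

/-- BiHom-Novikov algebra: BiHom-pre-Lie plus `(a*β(b))*αβ(c) = (a*β(c))*αβ(b)`. -/
def BHNovikov {K A : Type*} [Field K] [AddCommGroup A] [Module K A]
    (c : A →ₗ[K] A →ₗ[K] A) (α β : A →ₗ[K] A) : Prop :=
  BHPreLie c α β ∧
  (∀ a b x, c (c a (β b)) (α (β x)) = c (c a (β x)) (α (β b)))

/-- BiHom-pre-Lie bimodule over a BiHom-pre-Lie algebra `(A, c, α, β)`. -/
def BHPreLieBimod {K A M : Type*} [Field K] [AddCommGroup A] [Module K A]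
    [AddCommGroup M] [Module K M]
    (c : A →ₗ[K] A →ₗ[K] A) (α β : A →ₗ[K] A)
    (cl : A →ₗ[K] M →ₗ[K] M) (cr : M →ₗ[K] A →ₗ[K] M)
    (αM βM : M →ₗ[K] M) : Prop :=
  (∀ m, αM (βM m) = βM (αM m)) ∧
  (∀ a m, αM (cl a m) = cl (α a) (αM m)) ∧
  (∀ m a, αM (cr m a) = cr (αM m) (α a)) ∧
  (∀ a m, βM (cl a m) = cl (β a) (βM m)) ∧
  (∀ m a, βM (cr m a) = cr (βM m) (β a)) ∧
  (∀ a b m, cl (α (β a)) (cl (α b) m) - cl (c (β a) (α b)) (βM m) =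
    cl (α (β b)) (cl (α a) m) - cl (c (β b) (α a)) (βM m)) ∧
  (∀ a m x, cl (α (β a)) (cr (αM m) x) - cr (cl (β a) (αM m)) (β x) =
    cr (αM (βM m)) (c (α a) x) - cr (cr (βM m) (α a)) (β x))

/-- a BiHom-dendriform bimodule (with invertible structure maps) gives a
BiHom-pre-Lie bimodule over the associated BiHom-pre-Lie algebra. -/
theorem stmt5 (K A M : Type*) [Field K] [AddCommGroup A] [Module K A]
    [AddCommGroup M] [Module K M]
    (p s : A →ₗ[K] A →ₗ[K] A) (αA βA : A ≃ₗ[K] A)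
    (pl sl : A →ₗ[K] M →ₗ[K] M) (pr sr : M →ₗ[K] A →ₗ[K] M)
    (αM βM : M ≃ₗ[K] M)
    (hA : BHDendAlg p s αA.toLinearMap βA.toLinearMap)
    (hM : BHDendBimod p s αA.toLinearMap βA.toLinearMap pl sl pr sr
      αM.toLinearMap βM.toLinearMap)
    -- the new operations
    (c : A →ₗ[K] A →ₗ[K] A)
    (hc : ∀ a b, c a b = s a b - p (αA.symm (βA b)) (αA (βA.symm a)))
    (cl : A →ₗ[K] M →ₗ[K] M) (cr : M →ₗ[K] A →ₗ[K] M)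
    (hcl : ∀ a m, cl a m = sl a m - pr (αM.symm (βM m)) (αA (βA.symm a)))
    (hcr : ∀ m a, cr m a = sr m a - pl (αA.symm (βA a)) (αM (βM.symm m))) :
    BHPreLie c αA.toLinearMap βA.toLinearMap ∧
    BHPreLieBimod c αA.toLinearMap βA.toLinearMap cl cr αM.toLinearMap βM.toLinearMap := by
  obtain ⟨hab, hap, has, hbp, hbs, ax6, ax7, ax8⟩ := hA
  obtain ⟨mab, mapl, mapr, masl, masr, mbpl, mbpr, mbsl, mbsr,
    m10, m11, m12, m13, m14, m15, m16, m17, m18⟩ := hM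
  simp only [LinearEquiv.coe_coe] at hab hap has hbp hbs ax6 ax7 ax8 mab mapl mapr masl masr mbpl mbpr mbsl mbsr m10 m11 m12 m13 m14 m15 m16 m17 m18
  have cba : ∀ x, βA (αA x) = αA (βA x) := fun x => (hab x).symm
  have cba2 : ∀ x, βA (αA.symm x) = αA.symm (βA x) := fun x => by
    apply αA.injective; rw [hab, αA.apply_symm_apply, αA.apply_symm_apply]
  have cba3 : ∀ x, βA.symm (αA x) = αA (βA.symm x) := fun x => by
    apply βA.injective; rw [βA.apply_symm_apply, ← hab, βA.apply_symm_apply]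
  have cba4 : ∀ x, βA.symm (αA.symm x) = αA.symm (βA.symm x) := fun x => by
    apply βA.injective; rw [βA.apply_symm_apply, cba2, βA.apply_symm_apply]
  have mcba : ∀ x, βM (αM x) = αM (βM x) := fun x => (mab x).symm
  have mcba2 : ∀ x, βM (αM.symm x) = αM.symm (βM x) := fun x => by
    apply αM.injective; rw [mab, αM.apply_symm_apply, αM.apply_symm_apply]
  have mcba3 : ∀ x, βM.symm (αM x) = αM (βM.symm x) := fun x => by
    apply βM.injective; rw [βM.apply_symm_apply, ← mab, βM.apply_symm_apply]
  have mcba4 : ∀ x, βM.symm (αM.symm x) = αM.symm (βM.symm x) := fun x => by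
    apply βM.injective; rw [βM.apply_symm_apply, mcba2, βM.apply_symm_apply]
  have sap : ∀ a b, αA.symm (p a b) = p (αA.symm a) (αA.symm b) := fun a b => by
    apply αA.injective; rw [αA.apply_symm_apply, hap, αA.apply_symm_apply, αA.apply_symm_apply]
  have sas : ∀ a b, αA.symm (s a b) = s (αA.symm a) (αA.symm b) := fun a b => by
    apply αA.injective; rw [αA.apply_symm_apply, has, αA.apply_symm_apply, αA.apply_symm_apply]
  have sbp : ∀ a b, βA.symm (p a b) = p (βA.symm a) (βA.symm b) := fun a b => by
    apply βA.injective; rw [βA.apply_symm_apply, hbp, βA.apply_symm_apply, βA.apply_symm_apply]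
  have sbs : ∀ a b, βA.symm (s a b) = s (βA.symm a) (βA.symm b) := fun a b => by
    apply βA.injective; rw [βA.apply_symm_apply, hbs, βA.apply_symm_apply, βA.apply_symm_apply]
  have spla : ∀ a m, αM.symm (pl a m) = pl (αA.symm a) (αM.symm m) := fun a m => by
    apply αM.injective; rw [αM.apply_symm_apply, mapl, αA.apply_symm_apply, αM.apply_symm_apply]
  have ssla : ∀ a m, αM.symm (sl a m) = sl (αA.symm a) (αM.symm m) := fun a m => by
    apply αM.injective; rw [αM.apply_symm_apply, masl, αA.apply_symm_apply, αM.apply_symm_apply]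
  have spra : ∀ m a, αM.symm (pr m a) = pr (αM.symm m) (αA.symm a) := fun m a => by
    apply αM.injective; rw [αM.apply_symm_apply, mapr, αA.apply_symm_apply, αM.apply_symm_apply]
  have ssra : ∀ m a, αM.symm (sr m a) = sr (αM.symm m) (αA.symm a) := fun m a => by
    apply αM.injective; rw [αM.apply_symm_apply, masr, αA.apply_symm_apply, αM.apply_symm_apply]
  have splb : ∀ a m, βM.symm (pl a m) = pl (βA.symm a) (βM.symm m) := fun a m => by
    apply βM.injective; rw [βM.apply_symm_apply, mbpl, βA.apply_symm_apply, βM.apply_symm_apply]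
  have sslb : ∀ a m, βM.symm (sl a m) = sl (βA.symm a) (βM.symm m) := fun a m => by
    apply βM.injective; rw [βM.apply_symm_apply, mbsl, βA.apply_symm_apply, βM.apply_symm_apply]
  have sprb : ∀ m a, βM.symm (pr m a) = pr (βM.symm m) (βA.symm a) := fun m a => by
    apply βM.injective; rw [βM.apply_symm_apply, mbpr, βA.apply_symm_apply, βM.apply_symm_apply]
  have ssrb : ∀ m a, βM.symm (sr m a) = sr (βM.symm m) (βA.symm a) := fun m a => by
    apply βM.injective; rw [βM.apply_symm_apply, mbsr, βA.apply_symm_apply, βM.apply_symm_apply]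
  refine ⟨⟨?_, ?_, ?_, ?_⟩, ?_, ?_, ?_, ?_, ?_, ?_, ?_⟩ <;>
    simp only [LinearEquiv.coe_coe]
  · exact hab
  · intro a b
    simp only [hc, map_sub, LinearMap.sub_apply, hap, has, hbp, hbs, sap, sas, sbp, sbs,
      cba, cba2, cba3, cba4, LinearEquiv.apply_symm_apply, LinearEquiv.symm_apply_apply]
  · intro a b
    simp only [hc, map_sub, LinearMap.sub_apply, hap, has, hbp, hbs, sap, sas, sbp, sbs,
      cba, cba2, cba3, cba4, LinearEquiv.apply_symm_apply, LinearEquiv.symm_apply_apply]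
  · intro a b x
    simp only [hc, map_sub, LinearMap.sub_apply, hap, has, hbp, hbs, sap, sas, sbp, sbs,
      cba, cba2, cba3, cba4, LinearEquiv.apply_symm_apply, LinearEquiv.symm_apply_apply]
    have R7ab := ax7 (βA a) (αA.symm (βA x)) (αA (αA (βA.symm b)))
    have R7ba := ax7 (βA b) (αA.symm (βA x)) (αA (αA (βA.symm a)))
    have R6ab := ax6 (αA.symm (αA.symm (βA (βA x)))) (αA b) (αA (αA (βA.symm a)))
    have R6ba := ax6 (αA.symm (αA.symm (βA (βA x)))) (αA a) (αA (αA (βA.symm b)))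
    simp only [cba, cba2, cba3, cba4, LinearEquiv.apply_symm_apply,
      LinearEquiv.symm_apply_apply] at R7ab R7ba R6ab R6ba
    rw [ax8 (βA a) (αA b) x, ax8 (βA b) (αA a) x, R7ab, R7ba, R6ab, R6ba]
    abel
  · exact mab
  · intro a m
    simp only [hcl, map_sub, LinearMap.sub_apply, mapl, masl, mapr, masr, mbpl, mbsl,
      mbpr, mbsr, spla, ssla, spra, ssra, splb, sslb, sprb, ssrb,
      cba, cba2, cba3, cba4, mcba, mcba2, mcba3, mcba4,
      LinearEquiv.apply_symm_apply, LinearEquiv.symm_apply_apply]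
  · intro m a
    simp only [hcr, map_sub, LinearMap.sub_apply, mapl, masl, mapr, masr, mbpl, mbsl,
      mbpr, mbsr, spla, ssla, spra, ssra, splb, sslb, sprb, ssrb,
      cba, cba2, cba3, cba4, mcba, mcba2, mcba3, mcba4,
      LinearEquiv.apply_symm_apply, LinearEquiv.symm_apply_apply]
  · intro a m
    simp only [hcl, map_sub, LinearMap.sub_apply, mapl, masl, mapr, masr, mbpl, mbsl,
      mbpr, mbsr, spla, ssla, spra, ssra, splb, sslb, sprb, ssrb,
      cba, cba2, cba3, cba4, mcba, mcba2, mcba3, mcba4,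
      LinearEquiv.apply_symm_apply, LinearEquiv.symm_apply_apply]
  · intro m a
    simp only [hcr, map_sub, LinearMap.sub_apply, mapl, masl, mapr, masr, mbpl, mbsl,
      mbpr, mbsr, spla, ssla, spra, ssra, splb, sslb, sprb, ssrb,
      cba, cba2, cba3, cba4, mcba, mcba2, mcba3, mcba4,
      LinearEquiv.apply_symm_apply, LinearEquiv.symm_apply_apply]
  · intro a b m
    simp only [hc, hcl, map_sub, LinearMap.sub_apply, hap, has, hbp, hbs, sap, sas, sbp, sbs,
      mapl, masl, mapr, masr, mbpl, mbsl, mbpr, mbsr,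
      spla, ssla, spra, ssra, splb, sslb, sprb, ssrb,
      cba, cba2, cba3, cba4, mcba, mcba2, mcba3, mcba4,
      LinearEquiv.apply_symm_apply, LinearEquiv.symm_apply_apply]
    have R14ab := m14 (βA a) (αM.symm (βM m)) (αA (αA (βA.symm b)))
    have R14ba := m14 (βA b) (αM.symm (βM m)) (αA (αA (βA.symm a)))
    have R16ab := m16 (αM.symm (αM.symm (βM (βM m)))) (αA b) (αA (αA (βA.symm a)))
    have R16ba := m16 (αM.symm (αM.symm (βM (βM m)))) (αA a) (αA (αA (βA.symm b)))
    simp only [cba, cba2, cba3, cba4, mcba, mcba2, mcba3, mcba4,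
      LinearEquiv.apply_symm_apply, LinearEquiv.symm_apply_apply] at R14ab R14ba R16ab R16ba
    rw [m12 (βA a) (αA b) m, m12 (βA b) (αA a) m, R14ab, R14ba, R16ab, R16ba]
    abel
  · intro a m x
    simp only [hc, hcl, hcr, map_sub, LinearMap.sub_apply, hap, has, hbp, hbs,
      sap, sas, sbp, sbs, mapl, masl, mapr, masr, mbpl, mbsl, mbpr, mbsr,
      spla, ssla, spra, ssra, splb, sslb, sprb, ssrb,
      cba, cba2, cba3, cba4, mcba, mcba2, mcba3, mcba4,
      LinearEquiv.apply_symm_apply, LinearEquiv.symm_apply_apply]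
    have R11 := m11 (βA a) (αA.symm (βA x)) (αM (αM (βM.symm m)))
    have R17 := m17 (βM m) (αA.symm (βA x)) (αA (αA (βA.symm a)))
    have R13 := m13 (αA.symm (αA.symm (βA (βA x)))) (αM m) (αA (αA (βA.symm a)))
    have R10 := m10 (αA.symm (αA.symm (βA (βA x)))) (αA a) (αM (αM (βM.symm m)))
    simp only [cba, cba2, cba3, cba4, mcba, mcba2, mcba3, mcba4,
      LinearEquiv.apply_symm_apply, LinearEquiv.symm_apply_apply] at R11 R17 R13 R10
    rw [m15 (βA a) (αM m) x, m18 (βM m) (αA a) x, R11, R17, R13, R10]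
    abel
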